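/- Let w solve Burgers' equation by characteristics from smooth increasing data w₀ with 0 < w₀' ≤ M. Then for all t ≥ 0 and x ∈ ℝ, 0 < ∂_x w(t,x) = w₀'(x₀)/(1 + t w₀'(x₀)) ≤ min{M, 1/t}, where x₀ = Φ_t^{-1}(x), Φ_t(x₀) = x₀ + t w₀(x₀). -/

import Mathlib

/-- Gradient decay for the Burgers solution constructed by characteristics:
if `w(t, x₀ + t w₀(x₀)) = w₀(x₀)` with `0 < w₀' ≤ M`, then at the point
`x = x₀ + t w₀(x₀)` the spatial derivative of `w(t,·)` equals
`w₀'(x₀)/(1 + t w₀'(x₀))`, which is positive, at most `M`, and at most `1/t`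
for `t > 0`. -/
theorem burgers_gradient_decay (w₀ : ℝ → ℝ) (M : ℝ)
    (hsmooth : ContDiff ℝ (⊤ : ℕ∞) w₀)
    (hpos : ∀ x : ℝ, 0 < deriv w₀ x)
    (hM : ∀ x : ℝ, deriv w₀ x ≤ M)
    (hbdd : ∃ B : ℝ, ∀ x : ℝ, |w₀ x| ≤ B)
    (w : ℝ → ℝ → ℝ)
    (hw : ∀ t x₀ : ℝ, 0 ≤ t → w t (x₀ + t * w₀ x₀) = w₀ x₀) :
    ∀ t x₀ : ℝ, 0 ≤ t →
      HasDerivAt (fun y => w t y) (deriv w₀ x₀ / (1 + t * deriv w₀ x₀))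
        (x₀ + t * w₀ x₀) ∧
      0 < deriv w₀ x₀ / (1 + t * deriv w₀ x₀) ∧
      deriv w₀ x₀ / (1 + t * deriv w₀ x₀) ≤ M ∧
      (0 < t → deriv w₀ x₀ / (1 + t * deriv w₀ x₀) ≤ 1 / t) := by
  intro t x₀ ht
  obtain ⟨B, hB⟩ := hbdd
  have hdiff : Differentiable ℝ w₀ := hsmooth.differentiable (by simp)
  set d := deriv w₀ x₀ with hd
  have hd0 : 0 < d := hpos x₀
  have hD : (0:ℝ) < 1 + t * d := by positivity
  have hD1 : (1:ℝ) ≤ 1 + t * d := by nlinarith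
  -- The characteristic map Φ
  set Φ : ℝ → ℝ := fun y => y + t * w₀ y with hΦdef
  have hw₀mono : StrictMono w₀ := strictMono_of_deriv_pos hpos
  have hΦmono : StrictMono Φ :=
    strictMono_id.add_monotone ((hw₀mono.monotone).const_mul ht)
  have hΦcont : Continuous Φ := continuous_id.add (continuous_const.mul (hdiff.continuous))
  have hΦtop : Filter.Tendsto Φ Filter.atTop Filter.atTop := by
    apply Filter.tendsto_atTop_mono (f := fun y => y - t * B)
    · intro y
      have h := abs_le.1 (hB y)
      have := mul_le_mul_of_nonneg_left h.1 ht
      show y - t * B ≤ y + t * w₀ y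
      nlinarith
    · exact Filter.tendsto_atTop_add_const_right _ _ Filter.tendsto_id
  have hΦbot : Filter.Tendsto Φ Filter.atBot Filter.atBot := by
    apply Filter.tendsto_atBot_mono (f := fun y => y + t * B)
    · intro y
      have h := abs_le.1 (hB y)
      have := mul_le_mul_of_nonneg_left h.2 ht
      show y + t * w₀ y ≤ y + t * B
      nlinarith
    · exact Filter.tendsto_atBot_add_const_right _ _ Filter.tendsto_id
  have hΦsurj : Function.Surjective Φ := hΦcont.surjective hΦtop hΦbot
  -- the inverse map
  set e := StrictMono.orderIsoOfSurjective Φ hΦmono hΦsurj with he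
  set g : ℝ → ℝ := ⇑e.symm with hg
  have hΦg : ∀ x, Φ (g x) = x := fun x => e.apply_symm_apply x
  have hgΦ : ∀ y, g (Φ y) = y := fun y => e.symm_apply_apply y
  have hgcont : Continuous g := OrderIso.continuous e.symm
  -- Φ has derivative 1 + t * d at x₀
  have hΦderiv : HasDerivAt Φ (1 + t * d) x₀ := by
    exact (hasDerivAt_id x₀).add (((hdiff x₀).hasDerivAt).const_mul t)
  have hgderiv : HasDerivAt g (1 + t * d)⁻¹ (Φ x₀) := by
    apply HasDerivAt.of_local_left_inverse (hgcont.continuousAt)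
      (by rwa [hgΦ x₀]) (ne_of_gt hD)
    exact Filter.Eventually.of_forall hΦg
  -- w t = w₀ ∘ g
  have hwt : ∀ x, w t x = w₀ (g x) := by
    intro x
    have := hw t (g x) ht
    rw [show g x + t * w₀ (g x) = Φ (g x) from rfl, hΦg x] at this
    exact this
  have hcomp : HasDerivAt (fun x => w₀ (g x)) (d / (1 + t * d)) (Φ x₀) := by
    have := (HasDerivAt.comp (Φ x₀)
      (by rw [hgΦ x₀]; exact (hdiff x₀).hasDerivAt) hgderiv)
    rw [div_eq_mul_inv]; exact this
  have hmain : HasDerivAt (fun y => w t y) (d / (1 + t * d)) (x₀ + t * w₀ x₀) := by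
    have hx : x₀ + t * w₀ x₀ = Φ x₀ := rfl
    rw [hx]
    exact hcomp.congr_of_eventuallyEq (Filter.Eventually.of_forall hwt)
  refine ⟨hmain, by positivity, ?_, ?_⟩
  · calc d / (1 + t * d) ≤ d / 1 := by
          apply div_le_div_of_nonneg_left hd0.le one_pos hD1
        _ = d := div_one d
        _ ≤ M := hM x₀
  · intro htpos
    rw [div_le_div_iff₀ hD htpos]
    nlinarith
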